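/- arXiv:1412.3622 — 2 statements merged into one kernel-verified Lean document; each statement's English description precedes it below -/
import Mathlib

section
/- If f is an eigenfunction of the Hamming graph F_q^n with eigenvalue λ = (q−1)n − qh, then for every vertex α and every i with 0 ≤ i ≤ n, the sum of f over the sphere of radius i centered at α equals P_i^{(q)}(h;n)·f(α). -/
/-!
Writing `S_i` for the sum of `f` over the sphere of radius `i` about `α`, both `S_i` and
`P_i(h; n) f(α)` satisfy the same three-term recurrence in `i` and agree at `i = 0, 1`.
Summing the eigenvalue equation over the sphere of radius `i + 1` counts each `γ` at distance `k`
from `α` as often as there are neighbours of `γ` at distance `i + 1` from `α`, which is `k`,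
`k (q - 2)` or `(n - k) (q - 1)` according as `k = i + 2`, `i + 1` or `i`; hence
`(i + 2) S_{i+2} + (i + 1) (q - 2) S_{i+1} + (n - i) (q - 1) S_i = λ S_{i+1}`.
The Krawtchouk numbers `P_i(h; n)` are the coefficients of `p = (1 - X)^h (1 + (q - 1) X)^(n - h)`,
and the first-order equation `(1 + (q - 1) X) (1 - X) p' = (λ - (q - 1) n X) p` yields the same
recurrence for them.
-/

/-- The q-ary Krawtchouk polynomial value P_i^{(q)}(t;N). -/
def kraw (q i t N : ℕ) : ℤ :=
  ∑ j ∈ Finset.range (i+1),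
    (-1:ℤ)^j * ((q:ℤ)-1)^(i-j) * (t.choose j : ℤ) * ((N-t).choose (i-j) : ℤ)

open Polynomial Finset

theorem Polynomial.coeff_one_add_C_mul_X_pow {R : Type*} [CommSemiring R] (c : R) (n k : ℕ) :
    ((1 + C c * X) ^ n).coeff k = c ^ k * n.choose k := by
  have : (1 + C c * X) ^ n = ((1 + X) ^ n).comp (C c * X) := by simp
  rw [this, comp_C_mul_X_coeff, coeff_one_add_X_pow, mul_comm]

theorem Polynomial.coeff_X_mul_derivative {R : Type*} [Semiring R] (p : R[X]) (j : ℕ) :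
    (X * derivative p).coeff j = j * p.coeff j := by
  cases j with
  | zero => simp
  | succ j => rw [coeff_X_mul, coeff_derivative, Nat.cast_comm]; push_cast; rfl

theorem Polynomial.mul_derivative_pow {R : Type*} [CommSemiring R] (p : R[X]) (n : ℕ) :
    p * derivative (p ^ n) = n * derivative p * p ^ n := by
  cases n with
  | zero => simp
  | succ n => rw [derivative_pow_succ, ← C_eq_natCast]; push_cast; ring

noncomputable def krawGen (a : ℤ) (t s : ℕ) : ℤ[X] := (1 - X) ^ t * (1 + C a * X) ^ s

theorem kraw_eq_coeff_krawGen (q i t N : ℕ) :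
    kraw q i t N = (krawGen ((q : ℤ) - 1) t (N - t)).coeff i := by
  have : (1 - X : ℤ[X]) = 1 + C (-1) * X := by simp [sub_eq_add_neg]
  rw [krawGen, this, coeff_mul, Nat.sum_antidiagonal_eq_sum_range_succ_mk]
  refine sum_congr rfl fun j _ => ?_
  simp only [coeff_one_add_C_mul_X_pow]
  ring

theorem mul_derivative_krawGen (a : ℤ) (t s : ℕ) :
    (1 + C a * X) * (1 - X) * derivative (krawGen a t s)
      = (C (a * s - t) - C (a * (s + t)) * X) * krawGen a t s := by
  have ht := mul_derivative_pow (1 - X : ℤ[X]) t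
  have hs := mul_derivative_pow (1 + C a * X) s
  simp only [derivative_sub, derivative_add, derivative_one, derivative_X, derivative_C_mul_X,
    zero_sub, zero_add] at ht hs
  simp only [krawGen, derivative_mul, map_sub, map_mul, map_add, map_natCast]
  linear_combination (1 + C a * X) * (1 + C a * X) ^ s * ht + (1 - X) * (1 - X) ^ t * hs

theorem kraw_zero (q t N : ℕ) : kraw q 0 t N = 1 := by
  simp [kraw]

theorem kraw_one (q t N : ℕ) (ht : t ≤ N) : kraw q 1 t N = ((q : ℤ) - 1) * N - q * t := by
  simp [kraw, sum_range_succ, Nat.cast_sub ht]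
  ring

theorem kraw_recurrence (q t N m : ℕ) (ht : t ≤ N) :
    ((m : ℤ) + 2) * kraw q (m + 2) t N
      = (((q : ℤ) - 1) * N - q * t - ((q : ℤ) - 2) * (m + 1)) * kraw q (m + 1) t N
        - ((q : ℤ) - 1) * (N - m) * kraw q m t N := by
  set a : ℤ := (q : ℤ) - 1
  set s : ℕ := N - t
  set p := krawGen a t s
  -- Multiplying the differential equation by `X` turns `derivative` into the coefficient-wise
  -- operator `X * derivative`, so the coefficients can be compared without index shifts.
  set θp := X * derivative p with hθp
  have h : (X * ((1 + C a * X) * (1 - X) * derivative p)).coeff (m + 2)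
      = (X * ((C (a * s - t) - C (a * (s + t)) * X) * p)).coeff (m + 2) := by
    rw [mul_derivative_krawGen]
  have lhs : X * ((1 + C a * X) * (1 - X) * derivative p)
      = θp + C (a - 1) * (X * θp) - C a * (X * (X * θp)) := by
    simp only [hθp, map_sub, map_one]; ring
  have rhs : X * ((C (a * s - t) - C (a * (s + t)) * X) * p)
      = C (a * s - t) * (X * p) - C (a * (s + t)) * (X * (X * p)) := by ring
  rw [lhs, rhs] at h
  simp only [coeff_sub, coeff_add, coeff_C_mul, coeff_X_mul] at h
  simp only [hθp, coeff_X_mul_derivative, ← kraw_eq_coeff_krawGen, p, a, s] at h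
  push_cast [Nat.cast_sub ht] at h ⊢
  linear_combination h

section HammingScheme

open Function

variable {ι A : Type*} [Fintype ι] [DecidableEq ι] [DecidableEq A]

theorem hammingDist_update_add (α γ : ι → A) (m : ι) (v : A) :
    hammingDist α (update γ m v) + (if α m = γ m then 0 else 1)
      = hammingDist α γ + (if α m = v then 0 else 1) := by
  simp only [hammingDist, card_filter]
  rw [← add_sum_erase _ _ (mem_univ m), ← add_sum_erase _ _ (mem_univ m),
    sum_congr rfl fun j hj => by rw [update_of_ne (ne_of_mem_erase hj)], update_self]
  by_cases hv : α m = v <;> by_cases hγ : α m = γ m <;> simp [hv, hγ] <;> omega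

variable [Fintype A]

def hammingSphere (α : ι → A) (i : ℕ) : Finset (ι → A) :=
  univ.filter fun β => hammingDist α β = i

theorem mem_hammingSphere {α β : ι → A} {i : ℕ} :
    β ∈ hammingSphere α i ↔ hammingDist α β = i := by
  simp [hammingSphere]

theorem sum_hammingSphere_one {M : Type*} [AddCommMonoid M] (γ : ι → A) (g : (ι → A) → M) :
    ∑ β ∈ hammingSphere γ 1, g β = ∑ m, ∑ v ∈ univ.erase (γ m), g (update γ m v) := by
  rw [← sum_sigma univ (fun m => univ.erase (γ m)) fun p => g (update γ p.1 p.2)]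
  refine (sum_bij (fun p _ => update γ p.1 p.2) ?_ ?_ ?_ fun _ _ => rfl).symm
  · rintro ⟨m, v⟩ hv
    simp only [mem_sigma, mem_univ, mem_erase, true_and, and_true] at hv
    simpa [mem_hammingSphere, Ne.symm hv] using hammingDist_update_add γ γ m v
  · rintro ⟨m, v⟩ hv ⟨m', v'⟩ hv' he
    simp only [mem_sigma, mem_univ, mem_erase, true_and, and_true] at hv hv' he
    obtain rfl : m = m' := by
      by_contra hm
      exact hv (by simpa [update_of_ne hm] using congrFun he m)
    simpa using congrFun he m
  · intro β hβ
    obtain ⟨m, hm⟩ := card_eq_one.1 (mem_hammingSphere.1 hβ)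
    have hdiff : ∀ j, γ j ≠ β j ↔ j = m := fun j => by simpa using Finset.ext_iff.1 hm j
    refine ⟨⟨m, β m⟩, by simpa [eq_comm] using (hdiff m).2 rfl, ?_⟩
    rw [update_eq_iff]
    exact ⟨rfl, fun j hj => not_not.1 fun h => hj ((hdiff j).1 h)⟩

theorem sum_hammingSphere_one_comp_hammingDist {R : Type*} [CommRing R] (α γ : ι → A)
    (g : ℕ → R) :
    ∑ β ∈ hammingSphere γ 1, g (hammingDist α β)
      = hammingDist α γ * g (hammingDist α γ - 1)
        + hammingDist α γ * (Fintype.card A - 2) * g (hammingDist α γ)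
        + (Fintype.card ι - hammingDist α γ) * (Fintype.card A - 1) * g (hammingDist α γ + 1) := by
  set k := hammingDist α γ
  have agree : ∀ m ∈ univ.filter fun m => α m = γ m,
      ∑ v ∈ univ.erase (γ m), g (hammingDist α (update γ m v))
        = (Fintype.card A - 1) * g (k + 1) := by
    intro m hm
    rw [mem_filter] at hm
    have hd : ∀ v ∈ univ.erase (γ m), hammingDist α (update γ m v) = k + 1 := by
      intro v hv
      have := hammingDist_update_add α γ m v
      rw [if_pos hm.2, if_neg (hm.2 ▸ (ne_of_mem_erase hv).symm)] at this
      omega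
    rw [sum_congr rfl fun v hv => by rw [hd v hv], sum_const, nsmul_eq_mul,
      cast_card_erase_of_mem (mem_univ _), card_univ]
  have disagree : ∀ m ∈ univ.filter fun m => ¬α m = γ m,
      ∑ v ∈ univ.erase (γ m), g (hammingDist α (update γ m v))
        = g (k - 1) + (Fintype.card A - 2) * g k := by
    intro m hm
    rw [mem_filter] at hm
    have hαm : α m ∈ univ.erase (γ m) := mem_erase.2 ⟨hm.2, mem_univ _⟩
    have hd : hammingDist α (update γ m (α m)) = k - 1 := by
      have := hammingDist_update_add α γ m (α m)
      rw [if_neg hm.2, if_pos rfl] at this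
      omega
    have hd' : ∀ v ∈ (univ.erase (γ m)).erase (α m), hammingDist α (update γ m v) = k := by
      intro v hv
      have := hammingDist_update_add α γ m v
      rw [if_neg hm.2, if_neg (ne_of_mem_erase hv).symm] at this
      omega
    rw [← add_sum_erase _ _ hαm, hd, sum_congr rfl fun v hv => by rw [hd' v hv], sum_const,
      nsmul_eq_mul, cast_card_erase_of_mem hαm, cast_card_erase_of_mem (mem_univ _), card_univ]
    ring
  have hcard : (#(univ.filter fun m => α m = γ m) : R) + k = Fintype.card ι := by
    rw [← Nat.cast_add, ← card_univ]
    exact congrArg _ (card_filter_add_card_filter_not _)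
  rw [sum_hammingSphere_one, ← sum_filter_add_sum_filter_not univ fun m => α m = γ m,
    sum_congr rfl agree, sum_congr rfl disagree, sum_const, sum_const, nsmul_eq_mul, nsmul_eq_mul,
    ← eq_sub_of_add_eq hcard]
  change _ + (k : R) * _ = _
  ring

theorem hammingSphere_zero (α : ι → A) : hammingSphere α 0 = {α} := by
  ext β
  simp [mem_hammingSphere, eq_comm]

theorem sum_hammingSphere_sum_hammingSphere_one {R : Type*} [CommRing R] (f : (ι → A) → R)
    (α : ι → A) (m : ℕ) :
    ∑ β ∈ hammingSphere α (m + 1), ∑ γ ∈ hammingSphere β 1, f γ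
      = (m + 2) * ∑ γ ∈ hammingSphere α (m + 2), f γ
        + (m + 1) * (Fintype.card A - 2) * ∑ γ ∈ hammingSphere α (m + 1), f γ
        + (Fintype.card ι - m) * (Fintype.card A - 1) * ∑ γ ∈ hammingSphere α m, f γ := by
  set g : ℕ → R := fun d => if d = m + 1 then 1 else 0
  have exchange : ∑ β ∈ hammingSphere α (m + 1), ∑ γ ∈ hammingSphere β 1, f γ
      = ∑ γ, (∑ β ∈ hammingSphere γ 1, g (hammingDist α β)) * f γ := by
    simp only [hammingSphere, sum_filter, sum_mul, g, ite_mul, one_mul, zero_mul]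
    rw [sum_comm]
    refine sum_congr rfl fun β _ => ?_
    split_ifs <;> simp [hammingDist_comm]
  have count : ∀ γ, (∑ β ∈ hammingSphere γ 1, g (hammingDist α β)) * f γ
      = (if hammingDist α γ = m + 2 then (m + 2) * f γ else 0)
        + (if hammingDist α γ = m + 1 then (m + 1) * (Fintype.card A - 2) * f γ else 0)
        + (if hammingDist α γ = m then (Fintype.card ι - m) * (Fintype.card A - 1) * f γ
            else 0) := by
    intro γ
    rw [sum_hammingSphere_one_comp_hammingDist]
    generalize hammingDist α γ = k
    obtain rfl | rfl | rfl | ⟨h2, h1, h0⟩ : k = m + 2 ∨ k = m + 1 ∨ k = m ∨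
        (k ≠ m + 2 ∧ k ≠ m + 1 ∧ k ≠ m) := by omega
    · simp [g]
    · simp [g]
    · simp [g]
    · simp [g, h2, h1, h0, show k - 1 ≠ m + 1 by omega]
  simp only [exchange, count, sum_add_distrib, ← sum_filter, ← mul_sum]
  rfl

end HammingScheme

theorem sum_hammingSphere_eq_kraw_mul {ι A R : Type*} [Fintype ι] [DecidableEq ι] [Fintype A]
    [DecidableEq A] [CommRing R] [IsDomain R] [CharZero R] (f : (ι → A) → R) (h : ℕ) (hh : h ≤ Fintype.card ι)
    (hf : ∀ α, ∑ β ∈ hammingSphere α 1, f β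
      = ((Fintype.card A - 1) * Fintype.card ι - Fintype.card A * h) * f α)
    (α : ι → A) (i : ℕ) :
    ∑ β ∈ hammingSphere α i, f β = kraw (Fintype.card A) i h (Fintype.card ι) * f α := by
  induction i using Nat.twoStepInduction with
  | zero => simp [hammingSphere_zero, kraw_zero]
  | one => rw [hf, kraw_one _ _ _ hh]; push_cast; ring
  | more m ih₀ ih₁ =>
    have hrec := sum_hammingSphere_sum_hammingSphere_one f α m
    simp only [hf, ← mul_sum, ih₀, ih₁] at hrec
    have hkraw := congrArg (Int.cast : ℤ → R) (kraw_recurrence (Fintype.card A) h _ m hh)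
    push_cast at hkraw
    apply mul_left_cancel₀ (show (m : R) + 2 ≠ 0 by exact_mod_cast (m + 1).succ_ne_zero)
    linear_combination -hrec - f α * hkraw

theorem stmt3_general (q n h : ℕ) (hh : h ≤ n)
    (f : (Fin n → Fin q) → ℂ)
    (hf : ∀ α, ∑ β ∈ Finset.univ.filter (fun β => hammingDist α β = 1), f β
            = (((q:ℂ)-1)*n - q*h) * f α)
    (α : Fin n → Fin q) (i : ℕ) :
    ∑ β ∈ Finset.univ.filter (fun β => hammingDist α β = i), f β
      = (kraw q i h n : ℂ) * f α := by
  simpa [hammingSphere] using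
    sum_hammingSphere_eq_kraw_mul f h (by simpa using hh) (by simpa [hammingSphere] using hf) α i

/-- For an eigenfunction f with eigenvalue (q−1)n−qh, the sum of f over any sphere
of radius i equals P_i^{(q)}(h;n)·f(α). -/
theorem stmt3 (q n h : ℕ) (hq : 2 ≤ q) (hn : 1 ≤ n) (hh : h ≤ n)
    (f : (Fin n → Fin q) → ℂ)
    (hf : ∀ α, ∑ β ∈ Finset.univ.filter (fun β => hammingDist α β = 1), f β
            = (((q:ℂ)-1)*n - q*h) * f α)
    (α : Fin n → Fin q) (i : ℕ) (hi : i ≤ n) :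
    ∑ β ∈ Finset.univ.filter (fun β => hammingDist α β = i), f β
      = (kraw q i h n : ℂ) * f α :=
  stmt3_general q n h hh f hf α i
end

section
/- Let f be a λ-eigenfunction of the hypercube F_q^n with λ = (q−1)n − qh, and suppose P_d^{(q)}(h;n) ≠ 0 for some d ≤ h. Then f(0) = (Σ_{α: wt(α)=d} f(α)) / P_d^{(q)}(h;n); in particular, the value of f at the zero vertex is uniquely determined by the values of f on the sphere of radius d about 0. -/
def wt {q n : ℕ} [NeZero q] (α : Fin n → Fin q) : ℕ :=
  (Finset.univ.filter (fun j => α j ≠ 0)).card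

/-!
The sphere sums `S_k = ∑_{wt α = k} f α` are the coefficients of the weight enumerator
`W = ∑_α f α X ^ wt α`. Counting the neighbours of a vertex by weight turns the eigenvalue
equation into the first-order differential equation
`(1 + (q - 2) X - (q - 1) X²) W' = (λ - (q - 1) n X) W`.
The Krawtchouk generating function `G = (1 - X)^h (1 + (q - 1) X)^(n - h)` solves the same
equation, and a polynomial solution is determined by its constant term, so `W = f 0 • G`;
comparing the coefficients of `X ^ d` gives `S_d = P_d(h) f 0`.
-/

open Finset Function Polynomial

namespace Polynomial

variable {R : Type*} [CommRing R]

-- Writing `W = X ^ (k + 1) * U` with `U(0) ≠ 0`, cancelling `X ^ k` and evaluating at `0`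
-- leaves `p(0) (k + 1) U(0) = 0`.
theorem eq_zero_of_mul_derivative_eq_mul [IsDomain R] [CharZero R] {p r W : R[X]}
    (hp : p.coeff 0 ≠ 0) (hW : p * derivative W = r * W) (hW0 : W.coeff 0 = 0) : W = 0 := by
  by_contra hne
  obtain ⟨U, hU, hXU⟩ := exists_eq_pow_rootMultiplicity_mul_and_not_dvd W hne 0
  rw [map_zero, sub_zero] at hU hXU
  generalize rootMultiplicity 0 W = m at hU
  cases m with
  | zero => exact hXU (X_dvd_iff.2 (by rwa [hU, pow_zero, one_mul] at hW0))
  | succ k =>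
    have hcancel : p * (C ((k : R) + 1) * U + X * derivative U) = r * X * U := by
      apply (isRegular_X_pow k).left
      simp only [hU, derivative_mul, derivative_X_pow] at hW
      push_cast at hW ⊢
      linear_combination hW
    have h0 := congrArg (coeff · 0) hcancel
    simp only [mul_coeff_zero, coeff_add, coeff_C_zero, coeff_X_zero, zero_mul, add_zero,
      mul_zero] at h0
    exact hXU (X_dvd_iff.2 (by simpa [hp, Nat.cast_add_one_ne_zero] using h0))

theorem eq_C_mul_of_mul_derivative_eq_mul [IsDomain R] [CharZero R] {p r W G : R[X]}
    (hp : p.coeff 0 ≠ 0) (hW : p * derivative W = r * W) (hG : p * derivative G = r * G)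
    (hG0 : G.coeff 0 = 1) : W = C (W.coeff 0) * G :=
  sub_eq_zero.1 <| eq_zero_of_mul_derivative_eq_mul (r := r) hp
    (by rw [derivative_sub, derivative_C_mul]; linear_combination hW - C (W.coeff 0) * hG)
    (by simp [hG0])

theorem mul_derivative_pow_s4 (u : R[X]) (m : ℕ) :
    u * derivative (u ^ m) = (m : R[X]) * derivative u * u ^ m := by
  cases m with
  | zero => simp
  | succ k =>
    rw [derivative_pow_succ]
    simp only [map_add, map_natCast, map_one, Nat.cast_succ]
    ring

theorem coeff_one_add_C_mul_X_pow_s4 (c : R) (m k : ℕ) :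
    ((1 + C c * X) ^ m).coeff k = c ^ k * m.choose k := by
  rw [show (1 + C c * X) ^ m = ((1 + X) ^ m).comp (C c * X) by simp [add_comp],
    comp_C_mul_X_coeff, coeff_one_add_X_pow, mul_comm]

end Polynomial

section Krawtchouk

variable (R : Type*) [CommRing R]

noncomputable def krawtchoukGenFun (q h n : ℕ) : R[X] :=
  (1 - X) ^ h * (1 + ((q : R[X]) - 1) * X) ^ (n - h)

theorem coeff_krawtchoukGenFun (q h n d : ℕ) :
    (krawtchoukGenFun R q h n).coeff d = kraw q d h n := by
  have hsub : (1 - X : R[X]) = 1 + C (-1) * X := by simp [sub_eq_add_neg]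
  have hq : (q : R[X]) - 1 = C ((q : R) - 1) := by simp
  rw [krawtchoukGenFun, hsub, hq, coeff_mul, Nat.sum_antidiagonal_eq_sum_range_succ_mk, kraw]
  push_cast
  refine sum_congr rfl fun j _ => ?_
  rw [coeff_one_add_C_mul_X_pow_s4, coeff_one_add_C_mul_X_pow_s4]
  ring

theorem mul_derivative_krawtchoukGenFun {q h n : ℕ} (hh : h ≤ n) :
    (1 + ((q : R[X]) - 2) * X - ((q : R[X]) - 1) * X ^ 2) *
        derivative (krawtchoukGenFun R q h n) =
      (C (((q : R) - 1) * n - q * h) - ((q : R[X]) - 1) * (n : R[X]) * X) *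
        krawtchoukGenFun R q h n := by
  have ha := mul_derivative_pow_s4 (1 - X : R[X]) h
  have hb := mul_derivative_pow_s4 (1 + ((q : R[X]) - 1) * X) (n - h)
  simp only [derivative_sub, derivative_add, derivative_one, derivative_X, derivative_mul,
    derivative_natCast, zero_sub, zero_add, mul_one] at ha hb
  simp only [krawtchoukGenFun, derivative_mul, map_sub, map_mul, map_natCast, map_one]
  rw [Nat.cast_sub hh] at hb
  linear_combination (1 + ((q : R[X]) - 1) * X) * (1 + ((q : R[X]) - 1) * X) ^ (n - h) * ha +
    (1 - X) * (1 - X) ^ h * hb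

end Krawtchouk

section Hamming

variable {ι F : Type*} [Fintype ι] [DecidableEq ι] [DecidableEq F]

theorem hammingDist_update_eq_one (β : ι → F) {j : ι} {v : F} (hv : v ≠ β j) :
    hammingDist β (update β j v) = 1 := by
  rw [hammingDist, card_eq_one]
  refine ⟨j, eq_singleton_iff_unique_mem.2 ⟨by simp [hv.symm], fun i hi => ?_⟩⟩
  by_contra hij
  simp [update_of_ne hij] at hi

theorem eq_update_of_hammingDist_eq_one {β α : ι → F} (h : hammingDist β α = 1) :
    ∃ j, α j ≠ β j ∧ α = update β j (α j) := by
  obtain ⟨j, hj⟩ := card_eq_one.1 h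
  have hdiff : ∀ i, β i ≠ α i ↔ i = j := fun i => by simpa using congrArg (i ∈ ·) hj
  refine ⟨j, fun h => (hdiff j).2 rfl h.symm, funext fun i => ?_⟩
  by_cases hij : i = j
  · subst hij; simp
  · rw [update_of_ne hij]; exact not_not.1 (mt (hdiff i).1 hij) |>.symm

theorem sum_hammingDist_eq_one {M : Type*} [AddCommMonoid M] [Fintype F] (β : ι → F)
    (g : (ι → F) → M) :
    ∑ α ∈ univ.filter (fun α => hammingDist β α = 1), g α =
      ∑ j, ∑ v ∈ univ.erase (β j), g (update β j v) := by
  rw [← sum_sigma univ (fun j => univ.erase (β j)) (fun x => g (update β x.1 x.2))]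
  refine (sum_bij (fun x _ => update β x.1 x.2) ?_ ?_ ?_ (fun _ _ => rfl)).symm
  · rintro ⟨j, v⟩ hv
    simpa using hammingDist_update_eq_one β (mem_erase.1 (mem_sigma.1 hv).2).1
  · rintro ⟨j, v⟩ hv ⟨j', v'⟩ hv' heq
    simp only [mem_sigma, mem_erase] at hv hv'
    obtain rfl : j = j' := by
      by_contra hjj
      have := congrFun heq j
      rw [update_self, update_of_ne hjj] at this
      exact hv.2.1 this
    simpa using congrFun heq j
  · intro α hα
    obtain ⟨j, hj, hα⟩ := eq_update_of_hammingDist_eq_one (mem_filter.1 hα).2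
    exact ⟨⟨j, α j⟩, by simpa using hj, hα.symm⟩

theorem hammingNorm_update [Zero F] (β : ι → F) (j : ι) (v : F) :
    hammingNorm (update β j v) = hammingNorm (update β j 0) + if v = 0 then 0 else 1 := by
  have key : ∀ v : F, hammingNorm (update β j v) =
      (if v = 0 then 0 else 1) + ∑ i ∈ univ \ {j}, if β i = 0 then 0 else 1 := by
    intro v
    rw [hammingNorm, card_filter]
    simp_rw [ne_eq, ite_not]
    rw [← sum_update_of_mem (mem_univ j)]
    exact sum_congr rfl fun i _ => apply_update (fun _ x => if x = 0 then 0 else 1) β j v i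
  rw [key v, key 0, if_pos rfl]
  ring

variable {R : Type*} [CommRing R] [Zero F] [Fintype F]

theorem X_mul_sum_X_pow_hammingNorm_update (β : ι → F) (j : ι) :
    X * ∑ v ∈ univ.erase (β j), (X : R[X]) ^ hammingNorm (update β j v) =
      if β j = 0 then ((Fintype.card F : R[X]) - 1) * X ^ (hammingNorm β + 2)
      else X ^ hammingNorm β + ((Fintype.card F : R[X]) - 2) * X ^ (hammingNorm β + 1) := by
  have hβ := hammingNorm_update β j (β j)
  rw [update_eq_self] at hβ
  have hv : ∀ v ∈ univ.erase (0 : F), (X : R[X]) ^ hammingNorm (update β j v) =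
      X ^ (hammingNorm (update β j 0) + 1) := fun v hv => by
    rw [hammingNorm_update, if_neg (ne_of_mem_erase hv)]
  split_ifs with h0
  · rw [h0, sum_congr rfl hv, sum_const, nsmul_eq_mul, cast_card_erase_of_mem (mem_univ _),
      card_univ, hβ, h0, if_pos rfl]
    ring
  · have h0mem : (0 : F) ∈ univ.erase (β j) := mem_erase.2 ⟨Ne.symm h0, mem_univ _⟩
    rw [← add_sum_erase _ _ h0mem, erase_right_comm, sum_congr rfl fun v hv' =>
      hv v (mem_of_mem_erase hv'), sum_const, nsmul_eq_mul,
      cast_card_erase_of_mem (mem_erase.2 ⟨h0, mem_univ _⟩),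
      cast_card_erase_of_mem (mem_univ _), card_univ, hβ, if_neg h0]
    ring

-- Multiplying by `X` avoids the exponent `hammingNorm β - 1` of the neighbours of lower weight.
theorem X_mul_sum_X_pow_hammingNorm_of_hammingDist_eq_one (β : ι → F) :
    X * ∑ α ∈ univ.filter (fun α => hammingDist β α = 1), (X : R[X]) ^ hammingNorm α =
      (((Fintype.card F : R[X]) - 1) * ((Fintype.card ι : R[X]) - (hammingNorm β : R[X])) * X ^ 2
        + (hammingNorm β : R[X]) * ((Fintype.card F : R[X]) - 2) * X + (hammingNorm β : R[X]))
        * X ^ hammingNorm β := by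
  have hcard : ((univ.filter (fun j => β j = 0)).card : R[X]) =
      Fintype.card ι - (hammingNorm β : R[X]) := by
    rw [eq_sub_iff_add_eq, hammingNorm, ← Nat.cast_add,
      card_filter_add_card_filter_not (fun j => β j = 0), card_univ]
  rw [sum_hammingDist_eq_one, mul_sum,
    sum_congr rfl fun j _ => X_mul_sum_X_pow_hammingNorm_update β j, sum_ite,
    sum_const, sum_const, nsmul_eq_mul, nsmul_eq_mul, hcard]
  change _ + (hammingNorm β : R[X]) * _ = _
  ring

noncomputable def weightEnumerator (f : (ι → F) → R) : R[X] :=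
  ∑ α, C (f α) * X ^ hammingNorm α

theorem coeff_weightEnumerator (f : (ι → F) → R) (k : ℕ) :
    (weightEnumerator f).coeff k = ∑ α ∈ univ.filter (fun α => hammingNorm α = k), f α := by
  simp only [weightEnumerator, finsetSum_coeff, coeff_C_mul_X_pow, sum_filter, eq_comm]

theorem coeff_zero_weightEnumerator (f : (ι → F) → R) :
    (weightEnumerator f).coeff 0 = f 0 := by
  simp only [coeff_weightEnumerator, hammingNorm_eq_zero, filter_eq', mem_univ, if_true,
    sum_singleton]

theorem X_mul_derivative_weightEnumerator (f : (ι → F) → R) :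
    X * derivative (weightEnumerator f) =
      ∑ α, C (f α) * ((hammingNorm α : R[X]) * X ^ hammingNorm α) := by
  simp only [weightEnumerator, derivative_sum, derivative_C_mul_X_pow, mul_sum]
  refine sum_congr rfl fun α _ => ?_
  cases hammingNorm α with
  | zero => simp
  | succ k =>
    rw [Nat.add_sub_cancel, C_mul, map_natCast]
    ring

theorem C_mul_weightEnumerator_of_eigen (f : (ι → F) → R) (lam : R)
    (hf : ∀ α, ∑ β ∈ univ.filter (fun β => hammingDist α β = 1), f β = lam * f α) :
    C lam * weightEnumerator f =
      ∑ β, C (f β) *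
        ∑ α ∈ univ.filter (fun α => hammingDist β α = 1), X ^ hammingNorm α := by
  simp_rw [weightEnumerator, mul_sum, ← mul_assoc, ← C_mul, ← hf, map_sum, sum_mul]
  exact sum_comm' fun α β => by simp [hammingDist_comm]

theorem mul_derivative_weightEnumerator_of_eigen (f : (ι → F) → R) (lam : R)
    (hf : ∀ α, ∑ β ∈ univ.filter (fun β => hammingDist α β = 1), f β = lam * f α) :
    (1 + ((Fintype.card F : R[X]) - 2) * X - ((Fintype.card F : R[X]) - 1) * X ^ 2) *
        derivative (weightEnumerator f) =
      (C lam - ((Fintype.card F : R[X]) - 1) * (Fintype.card ι : R[X]) * X) *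
        weightEnumerator f := by
  apply isRegular_X.left
  dsimp only
  rw [mul_left_comm X _ (derivative _), X_mul_derivative_weightEnumerator, sub_mul (C lam),
    mul_sub X, C_mul_weightEnumerator_of_eigen f lam hf, mul_sum _ _ X]
  simp_rw [mul_left_comm X (C _), X_mul_sum_X_pow_hammingNorm_of_hammingDist_eq_one]
  simp only [weightEnumerator, mul_sum, ← sum_sub_distrib]
  exact sum_congr rfl fun β _ => by ring

end Hamming

theorem stmt4_general (q n h d : ℕ) [NeZero q] (hh : h ≤ n) (hP : kraw q d h n ≠ 0)
    (f : (Fin n → Fin q) → ℂ)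
    (hf : ∀ α, ∑ β ∈ Finset.univ.filter (fun β => hammingDist α β = 1), f β
            = (((q:ℂ)-1)*n - q*h) * f α) :
    f (fun _ => 0) =
      (∑ α ∈ Finset.univ.filter (fun α => wt α = d), f α) / (kraw q d h n : ℂ) := by
  have hode := mul_derivative_weightEnumerator_of_eigen f _ hf
  rw [Fintype.card_fin, Fintype.card_fin] at hode
  have hW := eq_C_mul_of_mul_derivative_eq_mul (by simp) hode
    (mul_derivative_krawtchoukGenFun ℂ hh) (by simp [coeff_krawtchoukGenFun, kraw])
  have hcoeff := congrArg (coeff · d) hW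
  rw [coeff_C_mul, coeff_zero_weightEnumerator, coeff_weightEnumerator,
    coeff_krawtchoukGenFun] at hcoeff
  rw [eq_div_iff (Int.cast_ne_zero.2 hP)]
  -- `wt` is `hammingNorm` on `Fin n → Fin q` by definition.
  exact hcoeff.symm

/-- If P_d^{(q)}(h;n) ≠ 0 and d ≤ h, then the value of a λ-eigenfunction at the zero
vertex is (Σ_{wt(α)=d} f(α)) / P_d^{(q)}(h;n). -/
theorem stmt4 (q n h d : ℕ) [NeZero q] (hq : 2 ≤ q) (hn : 1 ≤ n) (hh : h ≤ n)
    (hd : d ≤ h) (hP : kraw q d h n ≠ 0)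
    (f : (Fin n → Fin q) → ℂ)
    (hf : ∀ α, ∑ β ∈ Finset.univ.filter (fun β => hammingDist α β = 1), f β
            = (((q:ℂ)-1)*n - q*h) * f α) :
    f (fun _ => 0) =
      (∑ α ∈ Finset.univ.filter (fun α => wt α = d), f α) / (kraw q d h n : ℂ) :=
  stmt4_general q n h d hh hP f hf
end
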